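/- Let F(t₁,t₂,t₃) = (1/12)t₃t₁³ + (1/2)t₁t₂t₃ + t₂³/12 + (1/4)t₃²·log t₃ and F_{B₃}(x₁,x₂,x₃) = (1/12)x₃x₁³ + x₂x₃x₁ + x₂³/6 + x₃²·log x₃. Then for all t₁, t₂ ∈ ℝ and all t₃ > 0: F_{B₃}(√2·t₁, t₂, t₃/√2) = 2·F(t₁,t₂,t₃) − ((log 2)/4)·t₃². (Hence the logarithmic Dubrovin–Frobenius manifold obtained from gl₃ is equivalent to the one on the orbit space of the reflection group B₃, since potentials differing by a constant rescaling of the flat coordinates, an overall factor, and a quadratic polynomial define equivalent Frobenius structures.) -/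
import Mathlib

/-- The potential (frob3) of the logarithmic Dubrovin–Frobenius manifold for `gl₃`. -/
noncomputable def Fgl3 (t1 t2 t3 : ℝ) : ℝ :=
  (1 / 12) * t3 * t1 ^ 3 + (1 / 2) * t1 * t2 * t3 + t2 ^ 3 / 12 +
    (1 / 4) * t3 ^ 2 * Real.log t3

/-- The Arsie–Lorenzoni–Mencattini–Moroni potential on the orbit space of `B₃`. -/
noncomputable def FB3 (x1 x2 x3 : ℝ) : ℝ :=
  (1 / 12) * x3 * x1 ^ 3 + x2 * x3 * x1 + x2 ^ 3 / 6 + x3 ^ 2 * Real.log x3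

/-- for all `t₁, t₂ ∈ ℝ` and `t₃ > 0`,
`F_{B₃}(√2 t₁, t₂, t₃/√2) = 2 F(t₁,t₂,t₃) − (log 2 / 4) t₃²`. -/
theorem gl3_equiv_B3 :
    ∀ t1 t2 t3 : ℝ, 0 < t3 →
      FB3 (Real.sqrt 2 * t1) t2 (t3 / Real.sqrt 2) =
        2 * Fgl3 t1 t2 t3 - (Real.log 2 / 4) * t3 ^ 2 := by
  intro t1 t2 t3 ht
  have hs : Real.sqrt 2 ≠ 0 := by positivity
  have hsq : Real.sqrt 2 * Real.sqrt 2 = 2 := Real.mul_self_sqrt (by norm_num)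
  have hlog : Real.log (t3 / Real.sqrt 2) = Real.log t3 - Real.log 2 / 2 := by
    rw [Real.log_div ht.ne' hs, Real.log_sqrt (by norm_num)]
  unfold FB3 Fgl3
  rw [hlog]
  have h2 : Real.sqrt 2 ^ 2 = 2 := Real.sq_sqrt (by norm_num)
  have h4 : Real.sqrt 2 ^ 4 = 4 := by
    rw [show Real.sqrt 2 ^ 4 = (Real.sqrt 2 ^ 2) ^ 2 by ring, h2]; norm_num
  field_simp
  ring_nf
  simp only [h2, h4]
  ring
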